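/- (Soundness of Reduction Rule 4 for Cut-MWBS.) Let (G, w, ℰ) be an instance of Cut-MWBS in which the good vertices are pairwise non-adjacent and every good vertex is incident to exactly one dart. Let v be a bad vertex, S a good edge-section of v, and ℰᵢ ∈ ℰ a part with ℰᵢ ⊆ S such that the darts at v of the edges of ℰᵢ form a consecutive arc within S and either all edges of ℰᵢ are directed into v or all are directed out of v. Fix e ∈ ℰᵢ, and let (G', w', ℰ') be obtained by deleting all edges of ℰᵢ except e together with their pendant good endpoints, setting w'(e) = ∑_{f ∈ ℰᵢ} w(f) and w' = w on all other edges, and replacing the part ℰᵢ of ℰ by {e}. Then Cut-MBW(G', w', ℰ') = Cut-MBW(G, w, ℰ). -/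

import Mathlib

open scoped Classical

/-- An embedded digraph: a finite edge set `edges` within an ambient type `E`,
maps `tail, head : E → V` with `tail e ≠ head e` for edges, and for each vertex a
cyclic ordering `rot v` (a list, considered up to rotation) containing exactly once
each dart at `v`.  A dart is a pair `(e, b)` where `b = true` marks the in-dart
(with `head e = v`) and `b = false` the out-dart (with `tail e = v`). -/
structure EmbDigraph (V : Type*) (E : Type*) where
  edges : Finset E
  tail : E → V
  head : E → V
  tail_ne_head : ∀ e ∈ edges, tail e ≠ head e
  rot : V → List (E × Bool)
  rot_nodup : ∀ u : V, (rot u).Nodup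
  mem_rot : ∀ (u : V) (d : E × Bool),
    d ∈ rot u ↔ d.1 ∈ edges ∧ ((d.2 = true ∧ head d.1 = u) ∨ (d.2 = false ∧ tail d.1 = u))

namespace EmbDigraph

variable {V : Type*} {E : Type*}

/-- A list of booleans consisting of a block of `true`s followed by a block of
`false`s: all in-darts precede all out-darts. -/
def IsTwoBlock (l : List Bool) : Prop :=
  ∃ a b : ℕ, l = List.replicate a true ++ List.replicate b false

/-- Vertex `u` is bimodal in the spanning subgraph `G[F]`: some rotation of its
dart list, restricted to the darts of edges in `F`, has all in-darts preceding all
out-darts. -/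
def VertexBimodalIn (G : EmbDigraph V E) (F : Finset E) (u : V) : Prop :=
  ∃ n : ℕ,
    IsTwoBlock ((((G.rot u).rotate n).filter fun d => decide (d.1 ∈ F)).map Prod.snd)

/-- The spanning subgraph `G[F]` is bimodal: every vertex is bimodal in it. -/
def BimodalIn (G : EmbDigraph V E) (F : Finset E) : Prop :=
  ∀ u : V, G.VertexBimodalIn F u

/-- A vertex is good if it is bimodal in `G` itself; otherwise it is bad. -/
def Good (G : EmbDigraph V E) (u : V) : Prop :=
  G.VertexBimodalIn G.edges u

/-- `m` is the maximum weight `MBW(G, w)` of a bimodal spanning subgraph of `G`. -/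
def IsMBW (G : EmbDigraph V E) (w : E → ℚ) (m : ℚ) : Prop :=
  IsGreatest {x : ℚ | ∃ F : Finset E, F ⊆ G.edges ∧ G.BimodalIn F ∧ ∑ e ∈ F, w e = x} m

end EmbDigraph

namespace EmbDigraph

variable {V : Type*} {E : Type*}

/-- The darts at `v` of the edges of `S` form a consecutive arc in the cyclic
ordering at `v`. -/
def ArcAt (G : EmbDigraph V E) (v : V) (S : Set E) : Prop :=
  ∃ n k : ℕ, ∀ d ∈ G.rot v, (d ∈ ((G.rot v).rotate n).take k ↔ d.1 ∈ S)

/-- `T ⊆ S` and the darts at `v` of the edges of `T` form a consecutive arc within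
the arc formed by the darts of `S` in the cyclic ordering at `v`. -/
def ArcWithin (G : EmbDigraph V E) (v : V) (S T : Set E) : Prop :=
  T ⊆ S ∧ ∃ n k a b : ℕ, a ≤ b ∧ b ≤ k ∧
    (∀ d ∈ G.rot v, (d ∈ ((G.rot v).rotate n).take k ↔ d.1 ∈ S)) ∧
    (∀ d ∈ G.rot v, (d ∈ (((G.rot v).rotate n).take b).drop a ↔ d.1 ∈ T))

/-- `S` is a set of edges incident to `v` whose darts at `v` form a consecutive arc
in the cyclic ordering at `v` and such that the endpoint other than `v` of every
edge of `S` is good. -/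
def SectionProps (G : EmbDigraph V E) (v : V) (S : Set E) : Prop :=
  S ⊆ ↑G.edges ∧ (∀ e ∈ S, G.tail e = v ∨ G.head e = v) ∧
    (∀ e ∈ S, G.Good (if G.tail e = v then G.head e else G.tail e)) ∧
    G.ArcAt v S

/-- A good edge-section of `v`: a maximal set of edges incident to `v` whose darts
at `v` form a consecutive arc and whose other endpoints are all good. -/
def GoodEdgeSection (G : EmbDigraph V E) (v : V) (S : Set E) : Prop :=
  G.SectionProps v S ∧ ∀ S' : Set E, S ⊆ S' → G.SectionProps v S' → S' = S

end EmbDigraph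

namespace EmbDigraph

variable {V : Type*} {E : Type*}

/-- `𝓔` is a partition of the edge set of `G` into nonempty parts. -/
def IsEdgePartition (G : EmbDigraph V E) (𝓔 : Finset (Finset E)) : Prop :=
  (∀ P ∈ 𝓔, P.Nonempty ∧ P ⊆ G.edges) ∧
    (∀ P ∈ 𝓔, ∀ Q ∈ 𝓔, P ≠ Q → Disjoint P Q) ∧
    (∀ e ∈ G.edges, ∃ P ∈ 𝓔, e ∈ P)

/-- `F` is feasible for the Cut-MWBS instance `(G, w, 𝓔)`: `F` is a union of parts
of `𝓔` and `G[F]` is bimodal. -/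
def CutFeasible (G : EmbDigraph V E) (𝓔 : Finset (Finset E)) (F : Finset E) : Prop :=
  F ⊆ G.edges ∧ (∀ P ∈ 𝓔, P ⊆ F ∨ Disjoint P F) ∧ G.BimodalIn F

/-- `m` is the maximum weight `Cut-MBW(G, w, 𝓔)` over feasible sets of the
Cut-MWBS instance `(G, w, 𝓔)`. -/
def IsCutMBW (G : EmbDigraph V E) (w : E → ℚ) (𝓔 : Finset (Finset E)) (m : ℚ) : Prop :=
  IsGreatest {x : ℚ | ∃ F : Finset E, G.CutFeasible 𝓔 F ∧ ∑ e ∈ F, w e = x} m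

end EmbDigraph

/-!
Deleting `Ei \ {e}` sends a feasible `F` to `F \ (Ei \ {e})` with the same weight, since `F`
contains all of `Ei` or none of it; conversely a feasible `F'` of the reduced instance lifts to
`F' ∪ Ei` if `e ∈ F'` and to `F'` otherwise. Only bimodality of the lift needs an argument. At
`v` the darts of `Ei` form a consecutive, equally directed block containing the dart of `e`, so
re-inflating that dart to the whole block keeps the cyclic in/out pattern of the form
"in-block, out-block". Any other endpoint of an edge of `Ei` is good, and a good vertex stays
bimodal in every spanning subgraph.
-/

namespace List

variable {α : Type*}

theorem exists_eq_append_rotate_eq_append (l : List α) (n : ℕ) :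
    ∃ A B, l = A ++ B ∧ l.rotate n = B ++ A :=
  ⟨_, _, (take_append_drop (n % l.length) l).symm, rotate_eq_drop_append_take_mod⟩

theorem IsRotated.filter {l l' : List α} (h : l ~r l') (p : α → Bool) :
    l.filter p ~r l'.filter p := by
  obtain ⟨n, rfl⟩ := h
  obtain ⟨A, B, rfl, hrot⟩ := exists_eq_append_rotate_eq_append l n
  rw [hrot, filter_append, filter_append]
  exact isRotated_append

theorem exists_filter_rotate_eq_rotate_filter (p : α → Bool) (l : List α) (m : ℕ) :
    ∃ n, (l.rotate n).filter p = (l.filter p).rotate m := by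
  obtain ⟨A', B', hAB, hrot⟩ := exists_eq_append_rotate_eq_append (l.filter p) m
  obtain ⟨A, B, rfl, rfl, rfl⟩ := filter_eq_append_iff.1 hAB
  exact ⟨A.length, by rw [hrot, rotate_append_length_eq, filter_append]⟩

theorem Pairwise.append_replicate_append {R : α → α → Prop} {X Y : List α} {x : α}
    (hx : R x x) (h : Pairwise R (X ++ x :: Y)) (k : ℕ) :
    Pairwise R (X ++ replicate k x ++ Y) := by
  simp only [pairwise_append, pairwise_cons, pairwise_replicate, mem_append, mem_cons,
    mem_replicate] at h ⊢
  grind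

end List

namespace EmbDigraph

open List

variable {V E : Type*}

theorem isTwoBlock_iff_pairwise (l : List Bool) : IsTwoBlock l ↔ l.Pairwise (· ≥ ·) := by
  constructor
  · rintro ⟨a, b, rfl⟩
    refine pairwise_append.2 ⟨pairwise_replicate.2 (Or.inr le_rfl),
      pairwise_replicate.2 (Or.inr le_rfl), fun x hx y hy => ?_⟩
    rw [eq_of_mem_replicate hx, eq_of_mem_replicate hy]
    exact Bool.false_le true
  · intro h
    induction l with
    | nil => exact ⟨0, 0, rfl⟩
    | cons x l ih =>
      rw [pairwise_cons] at h
      obtain ⟨a, b, hl⟩ := ih h.2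
      cases x with
      | true => exact ⟨a + 1, b, by rw [replicate_succ, hl]; rfl⟩
      | false =>
        exact ⟨0, l.length + 1, cons_eq_cons.2 ⟨rfl, eq_replicate_iff.2
          ⟨rfl, fun y hy => le_antisymm (h.1 y hy) (Bool.false_le y)⟩⟩⟩

def IsCyclicTwoBlock (l : List Bool) : Prop :=
  ∃ n, IsTwoBlock (l.rotate n)

theorem isCyclicTwoBlock_iff_exists_append {l : List Bool} :
    IsCyclicTwoBlock l ↔ ∃ X Y, l = X ++ Y ∧ (Y ++ X).Pairwise (· ≥ ·) := by
  simp only [IsCyclicTwoBlock, isTwoBlock_iff_pairwise]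
  constructor
  · rintro ⟨n, hn⟩
    obtain ⟨X, Y, hl, hrot⟩ := exists_eq_append_rotate_eq_append l n
    exact ⟨X, Y, hl, hrot ▸ hn⟩
  · rintro ⟨X, Y, rfl, h⟩
    exact ⟨X.length, by rwa [rotate_append_length_eq]⟩

theorem IsCyclicTwoBlock.of_isRotated {l l' : List Bool} (h : IsCyclicTwoBlock l)
    (hl : l ~r l') : IsCyclicTwoBlock l' := by
  obtain ⟨n, rfl⟩ := hl.symm
  obtain ⟨m, hm⟩ := h
  exact ⟨_, by rwa [rotate_rotate] at hm⟩

theorem IsCyclicTwoBlock.sublist {l l' : List Bool} (h : IsCyclicTwoBlock l) (hs : l' <+ l) :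
    IsCyclicTwoBlock l' := by
  obtain ⟨X, Y, rfl, hYX⟩ := isCyclicTwoBlock_iff_exists_append.1 h
  obtain ⟨X', Y', rfl, hX, hY⟩ := sublist_append_iff.1 hs
  exact isCyclicTwoBlock_iff_exists_append.2
    ⟨X', Y', rfl, List.Pairwise.sublist (hY.append hX) hYX⟩

theorem IsCyclicTwoBlock.replicate_append_of_cons {x : Bool} {l : List Bool}
    (h : IsCyclicTwoBlock (x :: l)) (k : ℕ) : IsCyclicTwoBlock (replicate k x ++ l) := by
  obtain ⟨A, B, hAB, hBA⟩ := isCyclicTwoBlock_iff_exists_append.1 h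
  rw [isCyclicTwoBlock_iff_exists_append]
  rcases A with _ | ⟨y, A⟩
  · obtain rfl : B = x :: l := hAB.symm
    refine ⟨[], replicate k x ++ l, rfl, ?_⟩
    simpa using List.Pairwise.append_replicate_append (R := (· ≥ ·)) (X := []) le_rfl
      (by simpa using hBA) k
  · simp only [cons_append, cons_eq_cons] at hAB
    obtain ⟨rfl, rfl⟩ := hAB
    exact ⟨replicate k x ++ A, B, by simp,
      by simpa using List.Pairwise.append_replicate_append (R := (· ≥ ·)) le_rfl hBA k⟩

theorem IsCyclicTwoBlock.append_replicate_append {X Y : List Bool} {x : Bool}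
    (h : IsCyclicTwoBlock (X ++ x :: Y)) (k : ℕ) :
    IsCyclicTwoBlock (X ++ replicate k x ++ Y) := by
  have hx : IsCyclicTwoBlock (x :: (Y ++ X)) :=
    h.of_isRotated (by simpa using isRotated_append (l := X) (l' := x :: Y))
  exact (hx.replicate_append_of_cons k).of_isRotated
    (by simpa using isRotated_append (l := replicate k x ++ Y) (l' := X))

/-- Inflating one flag `b` of a cyclic two-block pattern to a block `D` of flags `b`. -/
theorem IsCyclicTwoBlock.map_filter_of_block {α : Type*} {f p q : α → Bool}
    {A D C : List α} {b : Bool} (h : IsCyclicTwoBlock (((A ++ D ++ C).filter p).map f))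
    (hAC : ∀ d ∈ A ++ C, q d = p d) (hq : ∀ d ∈ D, q d = true) (hf : ∀ d ∈ D, f d = b)
    (hp : ∃ d ∈ D, p d = true) :
    IsCyclicTwoBlock (((A ++ D ++ C).filter q).map f) := by
  obtain ⟨d, hdD, hpd⟩ := hp
  have hA : A.filter q = A.filter p := filter_congr fun d hd => hAC d (mem_append_left _ hd)
  have hC : C.filter q = C.filter p := filter_congr fun d hd => hAC d (mem_append_right _ hd)
  have hD : (D.filter q).map f = replicate D.length b := by
    rw [filter_eq_self.2 hq]
    refine eq_replicate_iff.2 ⟨length_map .., fun x hx => ?_⟩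
    obtain ⟨d, hd, rfl⟩ := mem_map.1 hx
    exact hf d hd
  have hb : [b] <+ (D.filter p).map f :=
    singleton_sublist.2 (mem_map.2 ⟨d, mem_filter.2 ⟨hdD, hpd⟩, hf d hdD⟩)
  have h' : IsCyclicTwoBlock ((A.filter p).map f ++ b :: (C.filter p).map f) := by
    refine h.sublist ?_
    simpa [filter_append] using
      ((Sublist.refl ((A.filter p).map f)).append hb).append (Sublist.refl ((C.filter p).map f))
  simpa [filter_append, hA, hC, hD] using h'.append_replicate_append D.length

theorem vertexBimodalIn_iff_of_isRotated {G : EmbDigraph V E} {F : Finset E} {u : V}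
    {l : List (E × Bool)} (hl : l ~r G.rot u) :
    G.VertexBimodalIn F u ↔
      IsCyclicTwoBlock ((l.filter fun d => decide (d.1 ∈ F)).map Prod.snd) := by
  constructor
  · rintro ⟨n, hn⟩
    exact IsCyclicTwoBlock.of_isRotated ⟨0, by simpa using hn⟩
      ((((IsRotated.forall (G.rot u) n).trans hl.symm).filter fun d => decide (d.1 ∈ F)).map _)
  · intro h
    obtain ⟨m, hm⟩ := h.of_isRotated ((hl.filter fun d => decide (d.1 ∈ F)).map _)
    obtain ⟨n, hn⟩ :=
      exists_filter_rotate_eq_rotate_filter (fun d : E × Bool => decide (d.1 ∈ F)) _ m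
    exact ⟨n, by rwa [hn, map_rotate]⟩

theorem VertexBimodalIn.mono {G : EmbDigraph V E} {F F' : Finset E} {u : V}
    (h : G.VertexBimodalIn F u) (hF : F' ⊆ F) : G.VertexBimodalIn F' u := by
  obtain ⟨n, hn⟩ := h
  refine ⟨n, (isTwoBlock_iff_pairwise _).2 (((isTwoBlock_iff_pairwise _).1 hn).sublist ?_)⟩
  exact (monotone_filter_right _ fun d hd => by simpa using hF (by simpa using hd)).map _

theorem vertexBimodalIn_congr {G : EmbDigraph V E} {F F' : Finset E} {u : V}
    (h : ∀ d ∈ G.rot u, d.1 ∈ F ↔ d.1 ∈ F') :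
    G.VertexBimodalIn F u ↔ G.VertexBimodalIn F' u := by
  rw [vertexBimodalIn_iff_of_isRotated (IsRotated.refl _),
    vertexBimodalIn_iff_of_isRotated (IsRotated.refl _),
    filter_congr fun d hd => decide_eq_decide.2 (h d hd)]

theorem vertexBimodalIn_iff_of_rot_isRotated_filter {G G' : EmbDigraph V E} {K F : Finset E}
    {u : V} (hrot : G'.rot u ~r (G.rot u).filter fun d => decide (d.1 ∉ K))
    (hF : Disjoint F K) : G'.VertexBimodalIn F u ↔ G.VertexBimodalIn F u := by
  have hfilter : (((G.rot u).filter fun d => decide (d.1 ∉ K)).filter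
      fun d => decide (d.1 ∈ F)) = (G.rot u).filter fun d => decide (d.1 ∈ F) := by
    rw [filter_filter]
    refine filter_congr fun d _ => ?_
    by_cases hd : d.1 ∈ F <;> simp [hd, Finset.disjoint_left.1 hF]
  rw [vertexBimodalIn_iff_of_isRotated (IsRotated.refl _),
    vertexBimodalIn_iff_of_isRotated (IsRotated.refl _)]
  have h := (hrot.filter fun d => decide (d.1 ∈ F)).map Prod.snd
  rw [hfilter] at h
  exact ⟨fun h' => h'.of_isRotated h, fun h' => h'.of_isRotated h.symm⟩

theorem exists_forall_snd_eq_of_forall_head_or_tail {G : EmbDigraph V E} {T : Finset E} {v : V}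
    (hdir : (∀ f ∈ T, G.head f = v) ∨ (∀ f ∈ T, G.tail f = v)) :
    ∃ b : Bool, ∀ d ∈ G.rot v, d.1 ∈ T → d.2 = b := by
  rcases hdir with h | h
  · refine ⟨true, fun d hd hdT => ?_⟩
    obtain ⟨hdE, ⟨hd2, -⟩ | ⟨-, htail⟩⟩ := (G.mem_rot v d).1 hd
    · exact hd2
    · exact absurd (htail.trans (h _ hdT).symm) (G.tail_ne_head _ hdE)
  · refine ⟨false, fun d hd hdT => ?_⟩
    obtain ⟨hdE, ⟨-, hhead⟩ | ⟨hd2, -⟩⟩ := (G.mem_rot v d).1 hd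
    · exact absurd ((h _ hdT).trans hhead.symm) (G.tail_ne_head _ hdE)
    · exact hd2

theorem VertexBimodalIn.union_of_arcWithin {G : EmbDigraph V E} {F T : Finset E} {S : Set E}
    {v : V} {e : E} (h : G.VertexBimodalIn F v) (harc : G.ArcWithin v S ↑T)
    (hdir : (∀ f ∈ T, G.head f = v) ∨ (∀ f ∈ T, G.tail f = v))
    (heT : e ∈ T) (heF : e ∈ F) (hTE : T ⊆ G.edges) :
    G.VertexBimodalIn (F ∪ T) v := by
  obtain ⟨-, n, -, a, c, -, -, -, hT⟩ := harc
  obtain ⟨b, hb⟩ := exists_forall_snd_eq_of_forall_head_or_tail hdir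
  set l := (G.rot v).rotate n
  have hl : l ~r G.rot v := IsRotated.forall _ n
  set A := (l.take c).take a
  set D := (l.take c).drop a
  set C := l.drop c
  have hsplit : l = A ++ D ++ C := by simp only [A, D, C, take_append_drop]
  have hmem : ∀ d ∈ A ++ D ++ C, d ∈ D ↔ d.1 ∈ T := fun d hd =>
    (hT d (hl.mem_iff.1 (hsplit ▸ hd))).trans Finset.mem_coe
  have hAC : ∀ d ∈ A ++ C, d.1 ∉ T := by
    intro d hd hdT
    have hnodup : (A ++ D ++ C).Nodup := hsplit ▸ hl.nodup_iff.2 (G.rot_nodup v)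
    have hdD : d ∈ D := (hmem d (by simp only [mem_append] at hd ⊢; tauto)).2 hdT
    rw [nodup_append, nodup_append] at hnodup
    rcases mem_append.1 hd with hdA | hdC
    · exact hnodup.1.2.2 d hdA d hdD rfl
    · exact hnodup.2.2 d (mem_append_right _ hdD) d hdC rfl
  obtain ⟨b', heb'⟩ : ∃ b', (e, b') ∈ G.rot v := by
    rcases hdir with h | h
    · exact ⟨true, (G.mem_rot v _).2 ⟨hTE heT, Or.inl ⟨rfl, h e heT⟩⟩⟩
    · exact ⟨false, (G.mem_rot v _).2 ⟨hTE heT, Or.inr ⟨rfl, h e heT⟩⟩⟩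
  have heD : (e, b') ∈ D := (hmem _ (hsplit ▸ hl.mem_iff.2 heb')).2 heT
  have hDT : ∀ d ∈ D, d.1 ∈ T := fun d hd => (hmem d (by simp [hd])).1 hd
  rw [vertexBimodalIn_iff_of_isRotated hl, hsplit] at h ⊢
  refine h.map_filter_of_block (b := b) (fun d hd => ?_) (fun d hd => ?_) (fun d hd => ?_)
    ⟨_, heD, by simpa using heF⟩
  · simp [hAC d hd]
  · simp [hDT d hd]
  · exact hb d (hl.mem_iff.1 (hsplit ▸ by simp [hd])) (hDT d hd)

theorem SectionProps.good_of_mem_rot {G : EmbDigraph V E} {v u : V} {S : Set E}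
    (hS : G.SectionProps v S) {d : E × Bool} (hd : d ∈ G.rot u) (hdS : d.1 ∈ S)
    (hu : u ≠ v) :
    G.Good u := by
  obtain ⟨-, hinc, hgood, -⟩ := hS
  have hd' := hgood d.1 hdS
  obtain ⟨-, ⟨-, rfl⟩ | ⟨-, rfl⟩⟩ := (G.mem_rot u d).1 hd
  · split_ifs at hd' with htail
    · exact hd'
    · exact absurd ((hinc d.1 hdS).resolve_left htail) hu
  · rwa [if_neg hu] at hd'

theorem BimodalIn.union_of_arcWithin {G : EmbDigraph V E} {F T : Finset E} {S : Set E}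
    {v : V} {e : E} (h : G.BimodalIn F) (hS : G.SectionProps v S) (hTS : ↑T ⊆ S)
    (harc : G.ArcWithin v S ↑T)
    (hdir : (∀ f ∈ T, G.head f = v) ∨ (∀ f ∈ T, G.tail f = v))
    (heT : e ∈ T) (heF : e ∈ F) (hFE : F ⊆ G.edges) (hTE : T ⊆ G.edges) :
    G.BimodalIn (F ∪ T) := by
  intro u
  by_cases huv : u = v
  · subst huv
    exact (h u).union_of_arcWithin harc hdir heT heF hTE
  by_cases hgood : G.Good u
  · exact VertexBimodalIn.mono hgood (Finset.union_subset hFE hTE)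
  refine (vertexBimodalIn_congr fun d hd => ?_).2 (h u)
  have hdT : d.1 ∉ T := fun hdT => hgood (hS.good_of_mem_rot hd (hTS hdT) huv)
  simp [hdT]

section Merge

variable {G G' : EmbDigraph V E} {𝓔 : Finset (Finset E)} {Ei : Finset E} {e : E}

theorem CutFeasible.sdiff_erase {F : Finset E} (hF : G.CutFeasible 𝓔 F)
    (hdisj : ∀ P ∈ 𝓔, ∀ Q ∈ 𝓔, P ≠ Q → Disjoint P Q) (hEi : Ei ∈ 𝓔) (he : e ∈ Ei)
    (hE' : G'.edges = G.edges \ Ei.erase e)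
    (hrot : ∀ u, G'.rot u ~r (G.rot u).filter fun d => decide (d.1 ∉ Ei.erase e)) :
    G'.CutFeasible (insert {e} (𝓔.erase Ei)) (F \ Ei.erase e) := by
  obtain ⟨hFE, hparts, hbim⟩ := hF
  refine ⟨hE' ▸ Finset.sdiff_subset_sdiff hFE le_rfl, fun P hP => ?_, fun u => ?_⟩
  · rcases Finset.mem_insert.1 hP with rfl | hP
    · rcases hparts Ei hEi with h | h
      · exact Or.inl (Finset.singleton_subset_iff.2
          (Finset.mem_sdiff.2 ⟨h he, Finset.notMem_erase e Ei⟩))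
      · exact Or.inr (Finset.disjoint_singleton_left.2
          fun hm => Finset.disjoint_left.1 h he (Finset.mem_sdiff.1 hm).1)
    · obtain ⟨hPEi, hP⟩ := Finset.mem_erase.1 hP
      rcases hparts P hP with h | h
      · exact Or.inl (Finset.subset_sdiff.2
          ⟨h, (hdisj P hP Ei hEi hPEi).mono_right (Finset.erase_subset e Ei)⟩)
      · exact Or.inr (h.mono_right Finset.sdiff_subset)
  · exact (vertexBimodalIn_iff_of_rot_isRotated_filter (hrot u) Finset.sdiff_disjoint).2
      ((hbim u).mono Finset.sdiff_subset)

theorem CutFeasible.exists_sdiff_erase_eq {F' : Finset E} {S : Set E} {v : V}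
    (hF' : G'.CutFeasible (insert {e} (𝓔.erase Ei)) F')
    (hdisj : ∀ P ∈ 𝓔, ∀ Q ∈ 𝓔, P ≠ Q → Disjoint P Q) (hEi : Ei ∈ 𝓔) (hEiE : Ei ⊆ G.edges)
    (hS : G.SectionProps v S) (hEiS : ↑Ei ⊆ S) (harc : G.ArcWithin v S ↑Ei)
    (hdir : (∀ f ∈ Ei, G.head f = v) ∨ (∀ f ∈ Ei, G.tail f = v)) (he : e ∈ Ei)
    (hE' : G'.edges = G.edges \ Ei.erase e)
    (hrot : ∀ u, G'.rot u ~r (G.rot u).filter fun d => decide (d.1 ∉ Ei.erase e)) :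
    ∃ F, G.CutFeasible 𝓔 F ∧ F \ Ei.erase e = F' := by
  obtain ⟨hF'E, hparts', hbim'⟩ := hF'
  rw [hE'] at hF'E
  have hFG : F' ⊆ G.edges := hF'E.trans Finset.sdiff_subset
  have hK : Disjoint F' (Ei.erase e) := Finset.disjoint_of_subset_left hF'E Finset.sdiff_disjoint
  have hbim : G.BimodalIn F' := fun u =>
    (vertexBimodalIn_iff_of_rot_isRotated_filter (hrot u) hK).1 (hbim' u)
  have hparts : ∀ P ∈ 𝓔, P ≠ Ei → P ⊆ F' ∨ Disjoint P F' := fun P hP hne =>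
    hparts' P (Finset.mem_insert_of_mem (Finset.mem_erase.2 ⟨hne, hP⟩))
  by_cases heF' : e ∈ F'
  · refine ⟨F' ∪ Ei, ⟨Finset.union_subset hFG hEiE, fun P hP => ?_,
      hbim.union_of_arcWithin hS hEiS harc hdir he heF' hFG hEiE⟩, ?_⟩
    · by_cases hne : P = Ei
      · exact Or.inl (hne ▸ Finset.subset_union_right)
      · exact (hparts P hP hne).imp (·.trans Finset.subset_union_left)
          fun h => Finset.disjoint_union_right.2 ⟨h, hdisj P hP Ei hEi hne⟩
    · ext f
      have hfK : f ∈ F' → f ∉ Ei.erase e := fun h => Finset.disjoint_left.1 hK h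
      simp only [Finset.mem_sdiff, Finset.mem_union, Finset.mem_erase] at hfK ⊢
      grind
  · refine ⟨F', ⟨hFG, fun P hP => ?_, hbim⟩, Finset.sdiff_eq_self_of_disjoint hK⟩
    by_cases hne : P = Ei
    · subst hne
      refine Or.inr (Finset.disjoint_left.2 fun f hf hfF' => ?_)
      obtain rfl | hfe := eq_or_ne f e
      · exact heF' hfF'
      · exact Finset.disjoint_left.1 hK hfF' (Finset.mem_erase.2 ⟨hfe, hf⟩)
    · exact hparts P hP hne

theorem sum_sdiff_erase_eq {M : Type*} [AddCommMonoid M] {w w' : E → M} (he : e ∈ Ei)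
    (hw'e : w' e = ∑ f ∈ Ei, w f) (hw'o : ∀ f, f ≠ e → w' f = w f) {F : Finset E}
    (hF : Ei ⊆ F ∨ Disjoint Ei F) :
    ∑ f ∈ F \ Ei.erase e, w' f = ∑ f ∈ F, w f := by
  rcases hF with hF | hF
  · have hins : F \ Ei.erase e = insert e (F \ Ei) := by
      ext f
      simp only [Finset.mem_sdiff, Finset.mem_erase, Finset.mem_insert]
      grind
    calc ∑ f ∈ F \ Ei.erase e, w' f = w' e + ∑ f ∈ F \ Ei, w' f := by
          rw [hins, Finset.sum_insert fun h => (Finset.mem_sdiff.1 h).2 he]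
      _ = ∑ f ∈ Ei, w f + ∑ f ∈ F \ Ei, w f := by
          rw [hw'e, Finset.sum_congr rfl fun f hf =>
            hw'o f fun hfe => (Finset.mem_sdiff.1 hf).2 (hfe ▸ he)]
      _ = ∑ f ∈ F, w f := by rw [add_comm, Finset.sum_sdiff hF]
  · rw [Finset.sdiff_eq_self_of_disjoint (hF.mono_left (Finset.erase_subset e Ei)).symm]
    exact Finset.sum_congr rfl fun f hf =>
      hw'o f fun hfe => Finset.disjoint_left.1 hF he (hfe ▸ hf)

end Merge

end EmbDigraph

open EmbDigraph

theorem cut_reduction_rule_merge_general {V E : Type*}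
    (G G' : EmbDigraph V E) (w : E → ℚ)
    (𝓔 : Finset (Finset E)) (hpart : G.IsEdgePartition 𝓔)
    (v : V) (S : Set E) (hS : G.GoodEdgeSection v S)
    (Ei : Finset E) (hEi : Ei ∈ 𝓔) (hEiS : ↑Ei ⊆ S)
    (harc : G.ArcWithin v S ↑Ei)
    (hdir : (∀ f ∈ Ei, G.head f = v) ∨ (∀ f ∈ Ei, G.tail f = v))
    (e : E) (he : e ∈ Ei)
    (hE' : G'.edges = G.edges \ Ei.erase e)
    (hrot : ∀ u : V, ∃ n : ℕ,
      G'.rot u = ((G.rot u).filter fun d => decide (d.1 ∉ Ei.erase e)).rotate n)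
    (w' : E → ℚ) (hw'e : w' e = ∑ f ∈ Ei, w f) (hw'o : ∀ f : E, f ≠ e → w' f = w f)
    (𝓔' : Finset (Finset E)) (h𝓔' : 𝓔' = insert {e} (𝓔.erase Ei)) :
    ∀ m m' : ℚ, G.IsCutMBW w 𝓔 m → G'.IsCutMBW w' 𝓔' m' → m' = m := by
  subst h𝓔'
  have hrot' : ∀ u, G'.rot u ~r (G.rot u).filter fun d => decide (d.1 ∉ Ei.erase e) :=
    fun u => (hrot u).elim fun n hn => hn ▸ List.IsRotated.forall _ n
  have hsum : ∀ {F}, G.CutFeasible 𝓔 F → ∑ f ∈ F \ Ei.erase e, w' f = ∑ f ∈ F, w f :=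
    fun hF => sum_sdiff_erase_eq he hw'e hw'o (hF.2.1 Ei hEi)
  intro m m' hm hm'
  apply le_antisymm
  · obtain ⟨F', hF', rfl⟩ := hm'.1
    obtain ⟨F, hF, rfl⟩ := hF'.exists_sdiff_erase_eq hpart.2.1 hEi (hpart.1 Ei hEi).2 hS.1
      hEiS harc hdir he hE' hrot'
    exact hsum hF ▸ hm.2 ⟨F, hF, rfl⟩
  · obtain ⟨F, hF, rfl⟩ := hm.1
    exact hsum hF ▸ hm'.2 ⟨_, hF.sdiff_erase hpart.2.1 hEi he hE' hrot', rfl⟩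

/-- Soundness of Reduction Rule 4 for Cut-MWBS: a part `ℰᵢ ⊆ S` of a good
edge-section `S` of a bad vertex `v`, consecutive within `S` and all-in or all-out,
is replaced by a single representative edge `e ∈ ℰᵢ` carrying the total weight of
`ℰᵢ`; the other edges of `ℰᵢ` are deleted (their pendant good endpoints becoming
isolated).  Then `Cut-MBW(G', w', ℰ') = Cut-MBW(G, w, ℰ)`. -/
theorem cut_reduction_rule_merge {V E : Type*}
    (G G' : EmbDigraph V E) (w : E → ℚ) (hw : ∀ e, 0 ≤ w e)
    (𝓔 : Finset (Finset E)) (hpart : G.IsEdgePartition 𝓔)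
    (hind : ∀ e ∈ G.edges, ¬ (G.Good (G.tail e) ∧ G.Good (G.head e)))
    (hdeg : ∀ u : V, G.Good u → (G.rot u).length = 1)
    (v : V) (hv : ¬ G.Good v) (S : Set E) (hS : G.GoodEdgeSection v S)
    (Ei : Finset E) (hEi : Ei ∈ 𝓔) (hEiS : ↑Ei ⊆ S)
    (harc : G.ArcWithin v S ↑Ei)
    (hdir : (∀ f ∈ Ei, G.head f = v) ∨ (∀ f ∈ Ei, G.tail f = v))
    (e : E) (he : e ∈ Ei)
    (hE' : G'.edges = G.edges \ Ei.erase e)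
    (ht : G'.tail = G.tail) (hh : G'.head = G.head)
    (hrot : ∀ u : V, ∃ n : ℕ,
      G'.rot u = ((G.rot u).filter fun d => decide (d.1 ∉ Ei.erase e)).rotate n)
    (w' : E → ℚ) (hw'e : w' e = ∑ f ∈ Ei, w f) (hw'o : ∀ f : E, f ≠ e → w' f = w f)
    (𝓔' : Finset (Finset E)) (h𝓔' : 𝓔' = insert {e} (𝓔.erase Ei)) :
    ∀ m m' : ℚ, G.IsCutMBW w 𝓔 m → G'.IsCutMBW w' 𝓔' m' → m' = m :=
  cut_reduction_rule_merge_general G G' w 𝓔 hpart v S hS Ei hEi hEiS harc hdir e he hE' hrot w' hw'e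
    hw'o 𝓔' h𝓔'
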